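/- Let A(z) = Σ_{k≥ν} A_k z^k (with A_k ∈ M_n(K), ν ≤ 0) be the Laurent expansion at 0 of a matrix of rational functions, and let f(z) = Σ_{k≥0} f_k z^k and g(z) = Σ_{k≥0} g_k z^k be two vectors of formal power series each satisfying F(z) = A(z) F(z^q). If f_k = g_k for all 0 ≤ k ≤ ⌊−ν/(q−1)⌋, then f = g. Equivalently, the coefficients f_k for k > ⌊−ν/(q−1)⌋ are uniquely determined by the f_k with k ≤ ⌊−ν/(q−1)⌋ via the recurrence f_k = Σ_{r=ν}^{k} A_r f_{(k−r)/q} (where f_{(k−r)/q} = 0 if q does not divide k−r). -/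

import Mathlib

open Polynomial PowerSeries

/-- Substitution `z ↦ z^m` in a formal power series. -/
noncomputable def psExpand (K : Type*) [Field K] (m : ℕ) (f : PowerSeries K) : PowerSeries K :=
  PowerSeries.mk fun k => if m ∣ k then PowerSeries.coeff (R := K) (k / m) f else 0

/-- `K(z)` acts on Laurent series via the Laurent expansion at the origin. -/
noncomputable instance {K : Type*} [Field K] : Algebra (RatFunc K) (LaurentSeries K) :=
  RingHom.toAlgebra (@algebraMap (RatFunc K) (LaurentSeries K) _ _ (RatFunc.liftAlgebra K (LaurentSeries K)))

/-- for the system `F(z) = A(z) F(z^q)` with `A(z) = ∑_{k ≥ ν} A_k z^k`, `ν ≤ 0`,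
two power series solutions agreeing on all coefficients of index `≤ ⌊-ν/(q-1)⌋` coincide. -/
theorem mahler_system_solution_unique_after_critical_index {K : Type*} [Field K] [CharZero K]
    (q n : ℕ) (hq : 2 ≤ q)
    (A : Matrix (Fin n) (Fin n) (LaurentSeries K)) (ν : ℤ) (hν0 : ν ≤ 0)
    (hrat : ∀ i j, ∃ r : RatFunc K, (r : LaurentSeries K) = A i j)
    (hν : ∃ i j, (A i j).coeff ν ≠ 0)
    (hlow : ∀ k < ν, ∀ i j, (A i j).coeff k = 0)
    (f g : Fin n → PowerSeries K)
    (heqf : ∀ i, (f i : LaurentSeries K) =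
      ∑ j, A i j * (psExpand K q (f j) : LaurentSeries K))
    (heqg : ∀ i, (g i : LaurentSeries K) =
      ∑ j, A i j * (psExpand K q (g j) : LaurentSeries K))
    (hcoeff : ∀ k : ℕ, (k : ℤ) ≤ Int.fdiv (-ν) ((q : ℤ) - 1) →
      ∀ i, PowerSeries.coeff (R := K) k (f i) = PowerSeries.coeff (R := K) k (g i)) :
    f = g := by
  set B : ℤ := Int.fdiv (-ν) ((q : ℤ) - 1) with hB
  have hqpos : (0 : ℤ) < (q : ℤ) - 1 := by
    have : (2 : ℤ) ≤ (q : ℤ) := by exact_mod_cast hq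
    linarith
  have hBkey : -ν < (B + 1) * ((q : ℤ) - 1) := by
    have h1 := Int.fmod_add_mul_fdiv (-ν) ((q : ℤ) - 1)
    have h2 : Int.fmod (-ν) ((q : ℤ) - 1) < (q : ℤ) - 1 := Int.fmod_lt_of_pos _ hqpos
    nlinarith
  suffices h : ∀ k : ℕ, ∀ i, PowerSeries.coeff (R := K) k (f i) = PowerSeries.coeff (R := K) k (g i) by
    funext i
    exact PowerSeries.ext fun k => h k i
  intro k
  induction k using Nat.strong_induction_on with
  | _ k IH =>
    intro i
    by_cases hk : (k : ℤ) ≤ B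
    · exact hcoeff k hk i
    push_neg at hk
    -- difference series
    have hsub : ((f i : LaurentSeries K) - (g i : LaurentSeries K)) =
        ∑ j, A i j * (((psExpand K q (f j) - psExpand K q (g j) : PowerSeries K))
          : LaurentSeries K) := by
      rw [heqf i, heqg i, ← Finset.sum_sub_distrib]
      refine Finset.sum_congr rfl fun j _ => ?_
      rw [map_sub, mul_sub]
    have hco := congrArg (fun x : LaurentSeries K => x.coeff (k : ℤ)) hsub
    simp only [HahnSeries.coeff_sub] at hco
    rw [LaurentSeries.coeff_coe_powerSeries, LaurentSeries.coeff_coe_powerSeries] at hco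
    have hsum0 : (∑ j, A i j * (((psExpand K q (f j) - psExpand K q (g j) : PowerSeries K))
        : LaurentSeries K)).coeff (k : ℤ) = 0 := by
      have hms : (∑ j, A i j * ((HahnSeries.ofPowerSeries ℤ K)
          (psExpand K q (f j) - psExpand K q (g j)))).coeff (k : ℤ)
          = ∑ j, (A i j * ((HahnSeries.ofPowerSeries ℤ K)
            (psExpand K q (f j) - psExpand K q (g j)))).coeff (k : ℤ) :=
        map_sum (HahnSeries.coeff.addMonoidHom (k : ℤ)) _ Finset.univ
      rw [hms]
      refine Finset.sum_eq_zero fun j _ => ?_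
      show (A i j * _).coeff (k : ℤ) = 0
      rw [HahnSeries.coeff_mul]
      refine Finset.sum_eq_zero fun ij hij => ?_
      rw [Finset.mem_addAntidiagonal] at hij
      obtain ⟨h1, h2, h3⟩ := hij
      -- ij.1 ≥ ν
      have hr : ν ≤ ij.1 := by
        by_contra hlt
        exact h1 (hlow ij.1 (lt_of_not_ge hlt) i j)
      -- coefficient of the difference at ij.2 is zero
      suffices hz : (((psExpand K q (f j) - psExpand K q (g j) : PowerSeries K))
          : LaurentSeries K).coeff ij.2 = 0 by rw [hz, mul_zero]
      rw [PowerSeries.coeff_coe]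
      split_ifs with hneg
      · rfl
      push_neg at hneg
      rw [map_sub]
      simp only [psExpand, PowerSeries.coeff_mk]
      by_cases hdvd : q ∣ ij.2.natAbs
      · rw [if_pos hdvd, if_pos hdvd]
        have ht : ij.2.natAbs / q < k := by
          have hm : (ij.2.natAbs : ℤ) = ij.2 := Int.natAbs_of_nonneg hneg
          have hle : (q : ℤ) * (ij.2.natAbs / q : ℕ) ≤ ij.2 := by
            rw [← hm]
            have : q * (ij.2.natAbs / q) = ij.2.natAbs := Nat.mul_div_cancel' hdvd
            exact_mod_cast this.le
          have hub : ij.2 ≤ (k : ℤ) - ν := by omega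
          have hk1 : B + 1 ≤ (k : ℤ) := hk
          have : -ν < (k : ℤ) * ((q : ℤ) - 1) := by nlinarith
          have : (q : ℤ) * (ij.2.natAbs / q : ℕ) < (q : ℤ) * k := by nlinarith
          have := lt_of_mul_lt_mul_left this (by positivity)
          exact_mod_cast this
        rw [IH _ ht j, sub_self]
      · rw [if_neg hdvd, if_neg hdvd, sub_self]
    rw [hsum0] at hco
    exact sub_eq_zero.mp hco
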